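/- arXiv:2512.12845 — 2 statements merged into one kernel-verified Lean document; each statement's English description precedes it below -/
import Mathlib

section
/- For the 2×2 diagonal system x' = A(t)x with A(t) = diag(−ω − a t sin t, ω + a t sin t) and ω > a > 0, the first diagonal component satisfies the bound: for all t ≥ s, exp(∫_s^t (−ω − aτ sin τ) dτ) ≤ e^{2a} e^{−(ω−a)(t−s)} e^{2a|s|}. -/
/-!
The integrand has the explicit primitive `-ω τ - a (sin τ - τ cos τ)`, so the exponent equals
`-ω (t - s) + a ((t cos t - sin t) - (s cos s - sin s))`. Since `|τ cos τ| ≤ |τ|` and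
`|t| ≤ (t - s) + |s|`, the oscillating part is at most `a (2 + (t - s) + 2 |s|)`; a quantity
growing like `a t` is absorbed by weakening the rate from `ω` to `ω - a`, and the remaining
`2 a |s|` is the nonuniform part of the bound.
-/

open Real MeasureTheory intervalIntegral

theorem Real.hasDerivAt_sin_sub_mul_cos (x : ℝ) :
    HasDerivAt (fun τ => sin τ - τ * cos τ) (x * sin x) x :=
  ((hasDerivAt_sin x).sub ((hasDerivAt_id' x).mul (hasDerivAt_cos x))).congr_deriv (by ring)

theorem intervalIntegrable_mul_sin (s t : ℝ) :
    IntervalIntegrable (fun τ => τ * sin τ) volume s t :=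
  (continuous_id.mul continuous_sin).intervalIntegrable s t

theorem integral_mul_sin (s t : ℝ) :
    ∫ τ in s..t, τ * sin τ = (sin t - t * cos t) - (sin s - s * cos s) :=
  integral_eq_sub_of_hasDerivAt (fun x _ => hasDerivAt_sin_sub_mul_cos x)
    (intervalIntegrable_mul_sin s t)

theorem integral_neg_const_sub_const_mul_mul_sin (ω a s t : ℝ) :
    ∫ τ in s..t, (-ω - a * τ * sin τ) =
      -ω * (t - s) - a * ((sin t - t * cos t) - (sin s - s * cos s)) := by
  simp_rw [mul_assoc a]
  rw [intervalIntegral.integral_sub intervalIntegrable_const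
      ((intervalIntegrable_mul_sin s t).const_mul a),
    intervalIntegral.integral_const_mul, integral_mul_sin, intervalIntegral.integral_const,
    smul_eq_mul]
  ring

theorem Real.mul_cos_le_abs (x : ℝ) : |x * cos x| ≤ |x| := by
  rw [abs_mul]
  exact mul_le_of_le_one_right (abs_nonneg x) (abs_cos_le_one x)

theorem sin_sub_mul_cos_sub_le {s t : ℝ} (hst : s ≤ t) :
    (sin s - s * cos s) - (sin t - t * cos t) ≤ 2 + (t - s) + 2 * |s| := by
  have hsin_t := neg_one_le_sin t
  have hsin_s := sin_le_one s
  have hcos_t := (abs_le.mp (mul_cos_le_abs t)).2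
  have hcos_s := (abs_le.mp (mul_cos_le_abs s)).1
  have habs_t : |t| ≤ (t - s) + |s| := by
    have := abs_sub_abs_le_abs_sub t s
    rw [abs_of_nonneg (sub_nonneg.mpr hst)] at this
    linarith
  linarith

theorem diagonal_scalar_nonuniform_bound_general (ω a : ℝ) (ha : 0 < a) :
    ∀ s t : ℝ, s ≤ t →
      Real.exp (∫ τ in s..t, (-ω - a * τ * Real.sin τ)) ≤
        Real.exp (2 * a) * (Real.exp (-(ω - a) * (t - s)) * Real.exp (2 * a * |s|)) := by
  intro s t hst
  rw [integral_neg_const_sub_const_mul_mul_sin, ← exp_add, ← exp_add, exp_le_exp]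
  have hosc := mul_le_mul_of_nonneg_left (sin_sub_mul_cos_sub_le hst) ha.le
  linarith

/-- for the diagonal coefficient `-ω - a t sin t` with `ω > a > 0`,
for all `t ≥ s`, `exp(∫_s^t (-ω - aτ sin τ) dτ) ≤ e^{2a} e^{-(ω-a)(t-s)} e^{2a|s|}`;
i.e. the scalar evolution admits a nonuniform exponential bound with
`K = e^{2a}`, `α = ω - a`, `ε = 2a`. -/
theorem diagonal_scalar_nonuniform_bound (ω a : ℝ) (ha : 0 < a) (hω : a < ω) :
    ∀ s t : ℝ, s ≤ t →
      Real.exp (∫ τ in s..t, (-ω - a * τ * Real.sin τ)) ≤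
        Real.exp (2 * a) * (Real.exp (-(ω - a) * (t - s)) * Real.exp (2 * a * |s|)) :=
  diagonal_scalar_nonuniform_bound_general ω a ha
end

section
/- The space M̌ of (equivalence classes of) locally Bochner integrable functions x : ℝ → X with ‖x‖_{M̌} := sup_{t∈ℝ} ∫_t^{t+1} ‖x(s)‖_s ds < ∞ is a Banach space, where {‖·‖_s} is a family of norms each equivalent to the ambient norm with ‖v‖ ≤ ‖v‖_s ≤ C(s)‖v‖, C locally bounded, and s ↦ ‖v‖_s continuous. -/
/-!
Each `N t` is a seminorm, and local boundedness of `C` makes the family locally equi-Lipschitz,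
hence jointly continuous in `(t, v)`; so `s ↦ N s (g s)` is measurable whenever `g` is.
Because `‖·‖ ≤ N t`, an `M̌`-Cauchy sequence is Cauchy in `L¹` of every unit interval, uniformly in
the interval, so one subsequence with a summable rate converges a.e. on all unit intervals at once
(Riesz–Fischer) to some `x`. Fatou's lemma on each `(t, t + 1]` turns the uniform Cauchy bound into
`∫_t^{t+1} N s (f n s - x s) ds ≤ δ` for all `t` and large `n`, and the triangle inequality against
one `f m₀` puts `x` itself in `M̌`.
-/

open MeasureTheory Filter Topology Set
open scoped ENNReal

theorem Seminorm.continuous_uncurry_of_locally_bounded {T X : Type*} [TopologicalSpace T]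
    [NormedAddCommGroup X] [NormedSpace ℝ X] {p : T → Seminorm ℝ X}
    (hcont : ∀ v, Continuous fun t => p t v)
    (hbdd : ∀ t₀, ∃ M, ∀ᶠ t in 𝓝 t₀, ∀ v, p t v ≤ M * ‖v‖) :
    Continuous fun q : T × X => p q.1 q.2 := by
  refine continuous_iff_continuousAt.2 fun ⟨t₀, v₀⟩ => ?_
  obtain ⟨M, hM⟩ := hbdd t₀
  have hbound : Tendsto (fun q : T × X => M * ‖q.2 - v₀‖) (𝓝 (t₀, v₀)) (𝓝 0) := by
    have : Continuous fun q : T × X => M * ‖q.2 - v₀‖ := by fun_prop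
    simpa using this.tendsto (t₀, v₀)
  have hvar : Tendsto (fun q : T × X => p q.1 q.2 - p q.1 v₀) (𝓝 (t₀, v₀)) (𝓝 0) := by
    refine squeeze_zero_norm' ?_ hbound
    filter_upwards [continuousAt_fst.eventually hM] with q hq
    exact (abs_sub_map_le_sub _ _ _).trans (hq _)
  simpa [ContinuousAt] using hvar.add ((hcont v₀).continuousAt.comp continuousAt_fst)

section Integral
variable {α : Type*} [MeasurableSpace α] {μ : Measure α}

theorem lintegral_le_of_tendsto_ae
    {F : ℕ → α → ℝ≥0∞} {G : α → ℝ≥0∞} {c : ℝ≥0∞} (hF : ∀ k, AEMeasurable (F k) μ)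
    (hlim : ∀ᵐ s ∂μ, Tendsto (fun k => F k s) atTop (𝓝 (G s)))
    (hc : ∃ᶠ k in atTop, ∫⁻ s, F k s ∂μ ≤ c) : ∫⁻ s, G s ∂μ ≤ c :=
  calc ∫⁻ s, G s ∂μ = ∫⁻ s, liminf (fun k => F k s) atTop ∂μ :=
        lintegral_congr_ae (hlim.mono fun _ hs => hs.liminf_eq.symm)
    _ ≤ liminf (fun k => ∫⁻ s, F k s ∂μ) atTop := lintegral_liminf_le' hF
    _ ≤ c := liminf_le_of_frequently_le' hc

theorem lintegral_ofReal_le_of_integral_le {f : α → ℝ} {δ : ℝ} (hf0 : 0 ≤ᵐ[μ] f)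
    (hfi : Integrable f μ) (h : ∫ s, f s ∂μ ≤ δ) :
    ∫⁻ s, ENNReal.ofReal (f s) ∂μ ≤ ENNReal.ofReal δ :=
  ofReal_integral_eq_lintegral_ofReal hfi hf0 ▸ ENNReal.ofReal_le_ofReal h

theorem integrable_and_integral_le_of_lintegral_ofReal_le {f : α → ℝ} {δ : ℝ}
    (hf0 : 0 ≤ᵐ[μ] f) (hfm : AEStronglyMeasurable f μ) (hδ : 0 ≤ δ)
    (h : ∫⁻ s, ENNReal.ofReal (f s) ∂μ ≤ ENNReal.ofReal δ) :
    Integrable f μ ∧ ∫ s, f s ∂μ ≤ δ := by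
  refine ⟨⟨hfm, (hasFiniteIntegral_iff_ofReal hf0).2 (h.trans_lt ENNReal.ofReal_lt_top)⟩, ?_⟩
  rw [integral_eq_lintegral_of_nonneg_ae hf0 hfm]
  exact ENNReal.toReal_le_of_le_ofReal hδ h

end Integral

theorem exists_eventually_le_mul_norm_of_locally_bounded {X : Type*} [SeminormedAddGroup X]
    {q : ℝ → X → ℝ} {C : ℝ → ℝ} (hCloc : ∀ r : ℝ, ∃ M, ∀ t : ℝ, |t| ≤ r → C t ≤ M)
    (hq : ∀ t v, q t v ≤ C t * ‖v‖) (t₀ : ℝ) : ∃ M, ∀ᶠ t in 𝓝 t₀, ∀ v, q t v ≤ M * ‖v‖ := by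
  obtain ⟨M, hM⟩ := hCloc (|t₀| + 1)
  refine ⟨M, ?_⟩
  filter_upwards [Metric.ball_mem_nhds t₀ one_pos] with t ht v
  refine (hq t v).trans (mul_le_mul_of_nonneg_right (hM t ?_) (norm_nonneg v))
  linarith [abs_sub_abs_le_abs_sub t t₀, Real.dist_eq t t₀ ▸ Metric.mem_ball.1 ht]

theorem locallyIntegrable_of_integrableOn_Ioc {E : Type*} [NormedAddCommGroup E] {x : ℝ → E}
    (h : ∀ t, IntegrableOn x (Ioc t (t + 1))) : LocallyIntegrable x :=
  fun t => ⟨Ioc (t - 1 / 2) (t - 1 / 2 + 1), Ioc_mem_nhds (by linarith) (by linarith), h _⟩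

section SeminormFamily
variable {X : Type*} [NormedAddCommGroup X] [NormedSpace ℝ X] {p : ℝ → Seminorm ℝ X}
  {μ : Measure ℝ}

theorem MeasureTheory.AEStronglyMeasurable.seminorm_apply
    (hp : Continuous fun q : ℝ × X => p q.1 q.2) {g : ℝ → X} (hg : AEStronglyMeasurable g μ) :
    AEStronglyMeasurable (fun s => p s (g s)) μ :=
  hp.comp_aestronglyMeasurable (aestronglyMeasurable_id.prodMk hg)

theorem MeasureTheory.Integrable.seminorm_apply_sub
    (hp : Continuous fun q : ℝ × X => p q.1 q.2) {g h : ℝ → X}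
    (hg : AEStronglyMeasurable g μ) (hh : AEStronglyMeasurable h μ)
    (hpg : Integrable (fun s => p s (g s)) μ) (hph : Integrable (fun s => p s (h s)) μ) :
    Integrable (fun s => p s (g s - h s)) μ :=
  (hpg.add hph).mono' ((hg.sub hh).seminorm_apply hp) <| ae_of_all _ fun s => by
    rw [Real.norm_of_nonneg (apply_nonneg _ _)]
    exact map_sub_le_add (p s) (g s) (h s)

theorem integral_seminorm_apply_sub_le
    (hp : Continuous fun q : ℝ × X => p q.1 q.2) {g h : ℝ → X}
    (hg : AEStronglyMeasurable g μ) (hh : AEStronglyMeasurable h μ)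
    (hpg : Integrable (fun s => p s (g s)) μ) (hph : Integrable (fun s => p s (h s)) μ) :
    ∫ s, p s (g s - h s) ∂μ ≤ ∫ s, p s (g s) ∂μ + ∫ s, p s (h s) ∂μ := by
  rw [← integral_add hpg hph]
  exact integral_mono (hpg.seminorm_apply_sub hp hg hh hph) (hpg.add hph) fun s =>
    map_sub_le_add _ _ _

variable {ι : Type*} {ν : ι → Measure ℝ} {f : ℕ → ℝ → X}

theorem exists_subseq_ae_tendsto_of_lintegral_cauchy [CompleteSpace X]
    (hlow : ∀ t v, ‖v‖ ≤ p t v) (hf : ∀ n i, AEStronglyMeasurable (f n) (ν i))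
    (hcauchy : ∀ δ > (0 : ℝ), ∃ n₀ : ℕ, ∀ m ≥ n₀, ∀ n ≥ n₀, ∀ i,
      ∫⁻ s, ENNReal.ofReal (p s (f m s - f n s)) ∂ν i ≤ ENNReal.ofReal δ) :
    ∃ ψ : ℕ → ℕ, StrictMono ψ ∧ ∃ x : ℝ → X,
      ∀ i, ∀ᵐ s ∂ν i, Tendsto (fun k => f (ψ k) s) atTop (𝓝 (x s)) := by
  obtain ⟨ψ, hψ, hψc⟩ : ∃ ψ : ℕ → ℕ, StrictMono ψ ∧ ∀ k, ∀ m ≥ ψ k, ∀ n ≥ ψ k, ∀ i,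
      ∫⁻ s, ENNReal.ofReal (p s (f m s - f n s)) ∂ν i ≤ ENNReal.ofReal ((1 / 2) ^ (k + 1)) :=
    extraction_forall_of_eventually' fun k => (hcauchy _ (by positivity)).imp
      fun n₀ h j hj m hm n hn => h m (hj.trans hm) n (hj.trans hn)
  refine ⟨ψ, hψ, fun s => limUnder atTop fun k => f (ψ k) s, fun i => ?_⟩
  have hcau : ∀ N n m, N ≤ n → N ≤ m → eLpNorm (f (ψ n) - f (ψ m)) 1 (ν i)
      < ENNReal.ofReal ((1 / 2) ^ N) := fun N n m hn hm =>
    calc eLpNorm (f (ψ n) - f (ψ m)) 1 (ν i) = ∫⁻ s, ‖f (ψ n) s - f (ψ m) s‖ₑ ∂ν i :=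
          eLpNorm_one_eq_lintegral_enorm
      _ ≤ ∫⁻ s, ENNReal.ofReal (p s (f (ψ n) s - f (ψ m) s)) ∂ν i := lintegral_mono fun s => by
          rw [← ofReal_norm]
          exact ENNReal.ofReal_le_ofReal (hlow _ _)
      _ ≤ ENNReal.ofReal ((1 / 2) ^ (N + 1)) := hψc N _ (hψ.monotone hn) _ (hψ.monotone hm) i
      _ < ENNReal.ofReal ((1 / 2) ^ N) :=
          (ENNReal.ofReal_lt_ofReal_iff (by positivity)).2
            (pow_lt_pow_right_of_lt_one₀ (by norm_num) (by norm_num) N.lt_succ_self)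
  have hB : ∑' N, ENNReal.ofReal ((1 / 2 : ℝ) ^ N) ≠ ⊤ := by
    rw [← ENNReal.ofReal_tsum_of_nonneg (fun _ => by positivity) summable_geometric_two]
    exact ENNReal.ofReal_ne_top
  filter_upwards [Lp.ae_tendsto_of_cauchy_eLpNorm (fun n => hf (ψ n) i) le_rfl hB hcau]
    with s hs
  exact tendsto_nhds_limUnder hs

theorem lintegral_seminorm_sub_le_of_ae_tendsto
    (hp : Continuous fun q : ℝ × X => p q.1 q.2) (hf : ∀ n i, AEStronglyMeasurable (f n) (ν i))
    {ψ : ℕ → ℕ} (hψ : Tendsto ψ atTop atTop) {x : ℝ → X}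
    (hlim : ∀ i, ∀ᵐ s ∂ν i, Tendsto (fun k => f (ψ k) s) atTop (𝓝 (x s)))
    {δ : ℝ} {n₀ : ℕ} (hn₀ : ∀ m ≥ n₀, ∀ n ≥ n₀, ∀ i,
      ∫⁻ s, ENNReal.ofReal (p s (f m s - f n s)) ∂ν i ≤ ENNReal.ofReal δ)
    {n : ℕ} (hn : n₀ ≤ n) (i : ι) :
    ∫⁻ s, ENNReal.ofReal (p s (f n s - x s)) ∂ν i ≤ ENNReal.ofReal δ := by
  refine lintegral_le_of_tendsto_ae
    (fun k => (((hf n i).sub (hf (ψ k) i)).seminorm_apply hp).aemeasurable.ennreal_ofReal) ?_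
    ((hψ.eventually_ge_atTop n₀).mono fun k hk => hn₀ n hn _ hk i).frequently
  filter_upwards [hlim i] with s hs
  exact (ENNReal.continuous_ofReal.tendsto _).comp
    ((hp.tendsto _).comp (tendsto_const_nhds.prodMk_nhds (tendsto_const_nhds.sub hs)))

theorem exists_tendsto_integral_seminorm_of_cauchy [CompleteSpace X]
    (hp : Continuous fun q : ℝ × X => p q.1 q.2) (hlow : ∀ t v, ‖v‖ ≤ p t v)
    (hf : ∀ n i, AEStronglyMeasurable (f n) (ν i))
    (hint : ∀ m n i, Integrable (fun s => p s (f m s - f n s)) (ν i))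
    (hcauchy : ∀ δ > (0 : ℝ), ∃ n₀ : ℕ, ∀ m ≥ n₀, ∀ n ≥ n₀, ∀ i,
      ∫ s, p s (f m s - f n s) ∂ν i ≤ δ) :
    ∃ x : ℝ → X, (∀ i, AEStronglyMeasurable x (ν i)) ∧ ∀ δ > (0 : ℝ), ∃ n₀ : ℕ, ∀ n ≥ n₀, ∀ i,
      Integrable (fun s => p s (f n s - x s)) (ν i) ∧ ∫ s, p s (f n s - x s) ∂ν i ≤ δ := by
  have hcauchy' : ∀ δ > (0 : ℝ), ∃ n₀ : ℕ, ∀ m ≥ n₀, ∀ n ≥ n₀, ∀ i,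
      ∫⁻ s, ENNReal.ofReal (p s (f m s - f n s)) ∂ν i ≤ ENNReal.ofReal δ := fun δ hδ =>
    (hcauchy δ hδ).imp fun n₀ h m hm n hn i => lintegral_ofReal_le_of_integral_le
      (ae_of_all _ fun s => apply_nonneg (p s) _) (hint m n i) (h m hm n hn i)
  obtain ⟨ψ, hψ, x, hlim⟩ := exists_subseq_ae_tendsto_of_lintegral_cauchy hlow hf hcauchy'
  have hxm (i : ι) : AEStronglyMeasurable x (ν i) :=
    aestronglyMeasurable_of_tendsto_ae _ (fun k => hf (ψ k) i) (hlim i)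
  refine ⟨x, hxm, fun δ hδ => ?_⟩
  obtain ⟨n₀, hn₀⟩ := hcauchy' δ hδ
  refine ⟨n₀, fun n hn i => integrable_and_integral_le_of_lintegral_ofReal_le
    (ae_of_all _ fun s => apply_nonneg (p s) _) (((hf n i).sub (hxm i)).seminorm_apply hp) hδ.le
    (lintegral_seminorm_sub_le_of_ae_tendsto hp hf hψ.tendsto_atTop hlim hn₀ hn i)⟩

end SeminormFamily

theorem spaceM_complete_general {X : Type*} [NormedAddCommGroup X] [NormedSpace ℝ X]
    [CompleteSpace X]
    (N : ℝ → X → ℝ) (C : ℝ → ℝ)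
    (hCloc : ∀ r : ℝ, ∃ M, ∀ t : ℝ, |t| ≤ r → C t ≤ M)
    (hadd : ∀ (t : ℝ) (u v : X), N t (u + v) ≤ N t u + N t v)
    (hsmul : ∀ (t : ℝ) (c : ℝ) (v : X), N t (c • v) = |c| * N t v)
    (hlow : ∀ (t : ℝ) (v : X), ‖v‖ ≤ N t v)
    (hupp : ∀ (t : ℝ) (v : X), N t v ≤ C t * ‖v‖)
    (hcont : ∀ v : X, Continuous fun t => N t v)
    (f : ℕ → ℝ → X)
    (hfloc : ∀ n, LocallyIntegrable (f n) volume)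
    (hfint : ∀ n, ∀ t : ℝ, IntegrableOn (fun s => N s (f n s)) (Set.Ioc t (t + 1)))
    (hfb : ∀ n, ∃ b, ∀ t : ℝ, ∫ s in Set.Ioc t (t + 1), N s (f n s) ≤ b)
    (hcauchy : ∀ δ > (0 : ℝ), ∃ n₀ : ℕ, ∀ m ≥ n₀, ∀ n ≥ n₀, ∀ t : ℝ,
      ∫ s in Set.Ioc t (t + 1), N s (f m s - f n s) ≤ δ) :
    ∃ x : ℝ → X, LocallyIntegrable x volume ∧
      (∀ t : ℝ, IntegrableOn (fun s => N s (x s)) (Set.Ioc t (t + 1))) ∧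
      (∃ b, ∀ t : ℝ, ∫ s in Set.Ioc t (t + 1), N s (x s) ≤ b) ∧
      ∀ δ > (0 : ℝ), ∃ n₀ : ℕ, ∀ n ≥ n₀, ∀ t : ℝ,
        ∫ s in Set.Ioc t (t + 1), N s (f n s - x s) ≤ δ := by
  let p : ℝ → Seminorm ℝ X := fun t => Seminorm.of (N t) (hadd t) (hsmul t)
  have hp : Continuous fun q : ℝ × X => p q.1 q.2 :=
    Seminorm.continuous_uncurry_of_locally_bounded hcont
      (exists_eventually_le_mul_norm_of_locally_bounded hCloc hupp)
  have hfm (n : ℕ) (t : ℝ) : AEStronglyMeasurable (f n) (volume.restrict (Ioc t (t + 1))) :=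
    (hfloc n).aestronglyMeasurable.restrict
  obtain ⟨x, hxm, hconv⟩ := exists_tendsto_integral_seminorm_of_cauchy hp hlow hfm
    (fun m n t => (hfint m t).seminorm_apply_sub hp (hfm m t) (hfm n t) (hfint n t)) hcauchy
  obtain ⟨m₀, hm₀⟩ := hconv 1 one_pos
  obtain ⟨b, hb⟩ := hfb m₀
  have hxN (t : ℝ) : IntegrableOn (fun s => N s (x s)) (Ioc t (t + 1)) := by
    have h := (hfint m₀ t).seminorm_apply_sub hp (hfm m₀ t) ((hfm m₀ t).sub (hxm t))
      (hm₀ m₀ le_rfl t).1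
    simp only [Pi.sub_apply, sub_sub_cancel] at h
    exact h
  refine ⟨x, locallyIntegrable_of_integrableOn_Ioc fun t => ?_, hxN, ⟨b + 1, fun t => ?_⟩,
    fun δ hδ => (hconv δ hδ).imp fun n₀ h n hn t => (h n hn t).2⟩
  · exact (hxN t).mono' (hxm t) (ae_of_all _ fun s => hlow s (x s))
  · calc ∫ s in Ioc t (t + 1), N s (x s)
        = ∫ s in Ioc t (t + 1), p s (f m₀ s - (f m₀ s - x s)) := by
          simp only [sub_sub_cancel]; rfl
      _ ≤ b + 1 := (integral_seminorm_apply_sub_le hp (hfm m₀ t) ((hfm m₀ t).sub (hxm t))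
          (hfint m₀ t) (hm₀ m₀ le_rfl t).1).trans (add_le_add (hb t) (hm₀ m₀ le_rfl t).2)

/-- the space `M̌` of (classes of) locally Bochner integrable `x : ℝ → X`
with `‖x‖_{M̌} = sup_t ∫_t^{t+1} ‖x(s)‖_s ds < ∞` is complete: every Cauchy sequence in
the `M̌`-norm converges (in the `M̌`-norm) to an element of `M̌`; here `{‖·‖_s}` is a
family of norms with `‖v‖ ≤ ‖v‖_s ≤ C(s)‖v‖`, `C : ℝ → [1,∞)` locally bounded, and
`s ↦ ‖v‖_s` continuous, and functions are identified when equal almost everywhere. -/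
theorem spaceM_complete {X : Type*} [NormedAddCommGroup X] [NormedSpace ℝ X]
    [CompleteSpace X]
    (N : ℝ → X → ℝ) (C : ℝ → ℝ)
    (hC1 : ∀ t, 1 ≤ C t)
    (hCloc : ∀ r : ℝ, ∃ M, ∀ t : ℝ, |t| ≤ r → C t ≤ M)
    (hadd : ∀ (t : ℝ) (u v : X), N t (u + v) ≤ N t u + N t v)
    (hsmul : ∀ (t : ℝ) (c : ℝ) (v : X), N t (c • v) = |c| * N t v)
    (hlow : ∀ (t : ℝ) (v : X), ‖v‖ ≤ N t v)
    (hupp : ∀ (t : ℝ) (v : X), N t v ≤ C t * ‖v‖)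
    (hcont : ∀ v : X, Continuous fun t => N t v)
    (f : ℕ → ℝ → X)
    (hfloc : ∀ n, LocallyIntegrable (f n) volume)
    (hfint : ∀ n, ∀ t : ℝ, IntegrableOn (fun s => N s (f n s)) (Set.Ioc t (t + 1)))
    (hfb : ∀ n, ∃ b, ∀ t : ℝ, ∫ s in Set.Ioc t (t + 1), N s (f n s) ≤ b)
    (hcauchy : ∀ δ > (0 : ℝ), ∃ n₀ : ℕ, ∀ m ≥ n₀, ∀ n ≥ n₀, ∀ t : ℝ,
      ∫ s in Set.Ioc t (t + 1), N s (f m s - f n s) ≤ δ) :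
    ∃ x : ℝ → X, LocallyIntegrable x volume ∧
      (∀ t : ℝ, IntegrableOn (fun s => N s (x s)) (Set.Ioc t (t + 1))) ∧
      (∃ b, ∀ t : ℝ, ∫ s in Set.Ioc t (t + 1), N s (x s) ≤ b) ∧
      ∀ δ > (0 : ℝ), ∃ n₀ : ℕ, ∀ n ≥ n₀, ∀ t : ℝ,
        ∫ s in Set.Ioc t (t + 1), N s (f n s - x s) ≤ δ :=
  spaceM_complete_general N C hCloc hadd hsmul hlow hupp hcont f hfloc hfint hfb hcauchy
end
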